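/- Let 1 ≤ r ≤ n, let (v_1,…,v_n) be an orthonormal basis of R^n, and let V = span(v_1+⋯+v_r, v_{r+1},…,v_n). Suppose nonzero vectors x, x_1,…,x_r ∈ R^n satisfy dist(x,V) ≤ δ and dist(x_j, v_j) ≤ δ for each j = 1,…,r, for some δ with 0 ≤ δ ≤ 1/(24r), and suppose x = a_1 x_1 + ⋯ + a_r x_r for some reals a_1,…,a_r. Then for each j = 1,…,r we have ‖x‖/(2√r) ≤ ‖a_j x_j‖ ≤ 2‖x‖/√r. -/

import Mathlib

open scoped BigOperators

noncomputable def projDist {n : ℕ} (x y : EuclideanSpace ℝ (Fin n)) : ℝ :=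
  Real.sqrt (‖x‖^2 * ‖y‖^2 - (inner ℝ x y : ℝ)^2) / (‖x‖ * ‖y‖)

noncomputable def distToSub {n : ℕ} (x : EuclideanSpace ℝ (Fin n))
    (V : Submodule ℝ (EuclideanSpace ℝ (Fin n))) : ℝ :=
  ‖((Vᗮ).orthogonalProjectionOnto x : EuclideanSpace ℝ (Fin n))‖ / ‖x‖

noncomputable def subDist {n : ℕ} (W V : Submodule ℝ (EuclideanSpace ℝ (Fin n))) : ℝ :=
  sSup {d : ℝ | ∃ x ∈ W, x ≠ 0 ∧ d = distToSub x V}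

noncomputable def gramVol {n : ℕ} {ι : Type*} [Fintype ι] [DecidableEq ι]
    (v : ι → EuclideanSpace ℝ (Fin n)) : ℝ :=
  Real.sqrt (Matrix.det (Matrix.of fun i j => (inner ℝ (v i) (v j) : ℝ)))

noncomputable def Theta {n : ℕ} {ι : Type*} [Fintype ι] [DecidableEq ι]
    (v : ι → EuclideanSpace ℝ (Fin n)) : ℝ :=
  gramVol v / ∏ i, ‖v i‖

def IsIntPt {n : ℕ} (x : EuclideanSpace ℝ (Fin n)) : Prop := ∀ i, ∃ k : ℤ, x i = (k : ℝ)

noncomputable def toE {n : ℕ} (x : Fin n → ℤ) : EuclideanSpace ℝ (Fin n) :=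
  (WithLp.equiv 2 (Fin n → ℝ)).symm (fun i => (x i : ℝ))

/-!
Put `y j = a j • xs j`, `e j = b j` and `u j = ⟪y j, e j⟫`. Each `y j` lies within `δ ‖y j‖` of
`u j • e j`, so `|u j| ≈ ‖y j‖`, and `x` differs from `∑ u j • e j` by at most
`δ ∑ ‖y j‖ ≤ δ r M ≤ M / 24`, where `M = max ‖y j‖`. As `e j - e k ⊥ V`, the coordinates
`⟪x, e j⟫ ≈ u j` almost agree, which forces `|u j| ≥ (19/24) M` for every `j`. Hence
`‖∑ u j • e j‖ = √(∑ u j ^ 2)` lies between `(19/24) √r M` and `√r M`, and so does `‖x‖` up to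
`M / 24`.
-/

open scoped RealInnerProductSpace

theorem mul_sum_le_of_mul_card_le {ι : Type*} [Fintype ι] {f : ι → ℝ} {δ c : ℝ} (hδ0 : 0 ≤ δ)
    (hδ : δ * Fintype.card ι ≤ c) {J : ι} (hJ : ∀ k, f k ≤ f J) (hJ0 : 0 ≤ f J) :
    δ * ∑ k, f k ≤ c * f J := by
  have : ∑ k, f k ≤ Fintype.card ι * f J := by
    simpa using Finset.sum_le_card_nsmul Finset.univ f _ fun k _ => hJ k
  calc δ * ∑ k, f k ≤ δ * Fintype.card ι * f J := by
        rw [mul_assoc]; exact mul_le_mul_of_nonneg_left this hδ0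
    _ ≤ c * f J := mul_le_mul_of_nonneg_right hδ hJ0

section

variable {E : Type*} [NormedAddCommGroup E] [InnerProductSpace ℝ E]

theorem Orthonormal.sub_mem_orthogonal_span_insert_sum {ι : Type*} {v : ι → E}
    (hv : Orthonormal ℝ v) {s : Finset ι} {i j : ι} (hi : i ∈ s) (hj : j ∈ s) :
    v i - v j ∈ (Submodule.span ℝ (insert (∑ k ∈ s, v k) (v '' (↑s)ᶜ)))ᗮ := by
  classical
  refine Submodule.isOrtho_iff_le.mp (Submodule.isOrtho_span.mpr ?_)
    (Submodule.mem_span_singleton_self _)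
  rintro w rfl z (rfl | ⟨k, hk, rfl⟩)
  · simp [inner_sub_left, inner_sum, orthonormal_iff_ite.mp hv, hi, hj]
  · have hik : i ≠ k := by rintro rfl; exact hk hi
    have hjk : j ≠ k := by rintro rfl; exact hk hj
    simp [inner_sub_left, orthonormal_iff_ite.mp hv, hik, hjk]

theorem one_sub_mul_norm_le_abs_inner {v w : E} {δ : ℝ} (hw : ‖w‖ = 1)
    (hv : ‖v - ⟪v, w⟫ • w‖ ≤ δ * ‖v‖) : (1 - δ) * ‖v‖ ≤ |⟪v, w⟫| := by
  have : ‖v‖ ≤ |⟪v, w⟫| + ‖v - ⟪v, w⟫ • w‖ := by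
    simpa [norm_smul, hw] using norm_le_insert' v (⟪v, w⟫ • w)
  linarith

variable {ι : Type*} [Fintype ι] {e : ι → E} {y : ι → E} {δ : ℝ}

theorem Orthonormal.norm_sum_smul_sq (he : Orthonormal ℝ e) (u : ι → ℝ) :
    ‖∑ i, u i • e i‖ ^ 2 = ∑ i, u i ^ 2 := by
  rw [← real_inner_self_eq_norm_sq, he.inner_sum]
  simp [sq]

theorem Orthonormal.norm_sum_smul_le (he : Orthonormal ℝ e) {u : ι → ℝ} {C : ℝ} (hC : 0 ≤ C)
    (h : ∀ i, |u i| ≤ C) : ‖∑ i, u i • e i‖ ≤ √(Fintype.card ι) * C := by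
  rw [← Real.sqrt_sq (norm_nonneg _), he.norm_sum_smul_sq, ← Real.sqrt_sq hC,
    ← Real.sqrt_mul (Nat.cast_nonneg _)]
  refine Real.sqrt_le_sqrt ?_
  calc ∑ i, u i ^ 2 ≤ ∑ _i : ι, C ^ 2 :=
        Finset.sum_le_sum fun i _ => by simpa using pow_le_pow_left₀ (abs_nonneg _) (h i) 2
    _ = _ := by simp

theorem Orthonormal.le_norm_sum_smul (he : Orthonormal ℝ e) {u : ι → ℝ} {c : ℝ} (hc : 0 ≤ c)
    (h : ∀ i, c ≤ |u i|) : √(Fintype.card ι) * c ≤ ‖∑ i, u i • e i‖ := by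
  rw [← Real.sqrt_sq (norm_nonneg (∑ i, _)), he.norm_sum_smul_sq, ← Real.sqrt_sq hc,
    ← Real.sqrt_mul (Nat.cast_nonneg _)]
  refine Real.sqrt_le_sqrt ?_
  calc _ = ∑ _i : ι, c ^ 2 := by simp
    _ ≤ ∑ i, u i ^ 2 :=
        Finset.sum_le_sum fun i _ => by simpa using pow_le_pow_left₀ hc (h i) 2

theorem norm_sum_sub_sum_inner_smul_le
    (hy : ∀ j, ‖y j - ⟪y j, e j⟫ • e j‖ ≤ δ * ‖y j‖) :
    ‖∑ j, y j - ∑ j, ⟪y j, e j⟫ • e j‖ ≤ δ * ∑ j, ‖y j‖ := by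
  rw [← Finset.sum_sub_distrib, Finset.mul_sum]
  exact (norm_sum_le _ _).trans (Finset.sum_le_sum fun j _ => hy j)

theorem abs_inner_sum_sub_inner_le (he : Orthonormal ℝ e)
    (hy : ∀ j, ‖y j - ⟪y j, e j⟫ • e j‖ ≤ δ * ‖y j‖) (j : ι) :
    |⟪∑ k, y k, e j⟫ - ⟪y j, e j⟫| ≤ δ * ∑ k, ‖y k‖ := by
  have hcoeff : ⟪∑ k, ⟪y k, e k⟫ • e k, e j⟫ = ⟪y j, e j⟫ := by
    simpa using he.inner_left_fintype (fun k => ⟪y k, e k⟫) j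
  calc |⟪∑ k, y k, e j⟫ - ⟪y j, e j⟫|
      = |⟪∑ k, y k - ∑ k, ⟪y k, e k⟫ • e k, e j⟫| := by rw [inner_sub_left, hcoeff]
    _ ≤ ‖∑ k, y k - ∑ k, ⟪y k, e k⟫ • e k‖ * ‖e j‖ := abs_real_inner_le_norm _ _
    _ ≤ δ * ∑ k, ‖y k‖ := by rw [he.1 j, mul_one]; exact norm_sum_sub_sum_inner_smul_le hy

theorem abs_inner_ge_of_almost_aligned (he : Orthonormal ℝ e) (hδ0 : 0 ≤ δ)
    (hδ : δ * Fintype.card ι ≤ 1 / 24)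
    (hy : ∀ j, ‖y j - ⟪y j, e j⟫ • e j‖ ≤ δ * ‖y j‖)
    (hcoord : ∀ j k, |⟪∑ i, y i, e j⟫ - ⟪∑ i, y i, e k⟫| ≤ 2 * δ * ‖∑ i, y i‖)
    {J : ι} (hJ : ∀ k, ‖y k‖ ≤ ‖y J‖) (j : ι) :
    19 / 24 * ‖y J‖ ≤ |⟪y j, e j⟫| := by
  have hδ1 : δ ≤ 1 / 24 := by
    have : (1 : ℝ) ≤ Fintype.card ι := by exact_mod_cast Fintype.card_pos_iff.mpr ⟨J⟩
    nlinarith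
  have hδS := mul_sum_le_of_mul_card_le (f := fun k => ‖y k‖) hδ0 hδ hJ (norm_nonneg _)
  have hxS : ‖∑ i, y i‖ ≤ ∑ k, ‖y k‖ := norm_sum_le _ _
  have hclose : |⟪y J, e J⟫ - ⟪y j, e j⟫| ≤ 4 * δ * ∑ k, ‖y k‖ := by
    have hJ' := abs_inner_sum_sub_inner_le he hy J
    have hj' := abs_inner_sum_sub_inner_le he hy j
    have hJj := hcoord J j
    rw [abs_le] at hJ' hj' hJj ⊢
    constructor <;> nlinarith
  have hδM : δ * ‖y J‖ ≤ 1 / 24 * ‖y J‖ := mul_le_mul_of_nonneg_right hδ1 (norm_nonneg _)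
  linarith [abs_sub_abs_le_abs_sub ⟪y J, e J⟫ ⟪y j, e j⟫,
    one_sub_mul_norm_le_abs_inner (he.1 J) (hy J)]

theorem norm_summand_comparable_of_almost_aligned (he : Orthonormal ℝ e) (hδ0 : 0 ≤ δ)
    (hδ : δ * Fintype.card ι ≤ 1 / 24)
    (hy : ∀ j, ‖y j - ⟪y j, e j⟫ • e j‖ ≤ δ * ‖y j‖)
    (hcoord : ∀ j k, |⟪∑ i, y i, e j⟫ - ⟪∑ i, y i, e k⟫| ≤ 2 * δ * ‖∑ i, y i‖) (j : ι) :
    ‖∑ i, y i‖ / (2 * √(Fintype.card ι)) ≤ ‖y j‖ ∧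
      ‖y j‖ ≤ 2 * ‖∑ i, y i‖ / √(Fintype.card ι) := by
  obtain ⟨J, -, hJ⟩ := Finset.exists_max_image Finset.univ (fun k => ‖y k‖) ⟨j, Finset.mem_univ j⟩
  replace hJ : ∀ k, ‖y k‖ ≤ ‖y J‖ := fun k => hJ k (Finset.mem_univ k)
  set M := ‖y J‖
  set s := √(Fintype.card ι)
  set X := ∑ i, ⟪y i, e i⟫ • e i
  have hM : 0 ≤ M := norm_nonneg _
  have hs : 1 ≤ s := Real.one_le_sqrt.mpr (by exact_mod_cast Fintype.card_pos_iff.mpr ⟨j⟩)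
  have hcoeff_low := abs_inner_ge_of_almost_aligned he hδ0 hδ hy hcoord hJ
  have hcoeff_up : ∀ k, |⟪y k, e k⟫| ≤ M := fun k =>
    (abs_real_inner_le_norm _ _).trans (by rw [he.1 k, mul_one]; exact hJ k)
  have hX_up : ‖X‖ ≤ s * M := he.norm_sum_smul_le hM hcoeff_up
  have hX_low : s * (19 / 24 * M) ≤ ‖X‖ := he.le_norm_sum_smul (by positivity) hcoeff_low
  have herr : ‖∑ i, y i - X‖ ≤ 1 / 24 * M :=
    (norm_sum_sub_sum_inner_smul_le hy).trans
      (mul_sum_le_of_mul_card_le (f := fun k => ‖y k‖) hδ0 hδ hJ (norm_nonneg _))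
  have hx_up := norm_le_norm_add_norm_sub' (∑ i, y i) X
  have hx_low := norm_sub_norm_le X (∑ i, y i)
  rw [norm_sub_rev] at hx_low
  have hsM : M ≤ s * M := le_mul_of_one_le_left hM hs
  have hyj : 19 / 24 * M ≤ ‖y j‖ :=
    (hcoeff_low j).trans ((abs_real_inner_le_norm _ _).trans_eq (by rw [he.1 j, mul_one]))
  constructor
  · rw [div_le_iff₀ (by positivity)]
    nlinarith
  · rw [le_div_iff₀ (by positivity)]
    nlinarith [hJ j]

end

theorem projDist_eq_norm_sub_inner_smul_div {n : ℕ} {y e : EuclideanSpace ℝ (Fin n)}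
    (he : ‖e‖ = 1) : projDist y e = ‖y - ⟪y, e⟫ • e‖ / ‖y‖ := by
  have hw : ‖y - ⟪y, e⟫ • e‖ ^ 2 = ‖y‖ ^ 2 * ‖e‖ ^ 2 - ⟪y, e⟫ ^ 2 := by
    rw [norm_sub_sq_real, real_inner_smul_right, norm_smul, Real.norm_eq_abs, he, mul_one, sq_abs]
    ring
  rw [projDist, ← hw, Real.sqrt_sq (norm_nonneg _), he, mul_one]

theorem norm_sub_inner_smul_le_of_projDist_le {n : ℕ} {y e : EuclideanSpace ℝ (Fin n)} {δ : ℝ}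
    (he : ‖e‖ = 1) (h : projDist y e ≤ δ) : ‖y - ⟪y, e⟫ • e‖ ≤ δ * ‖y‖ := by
  calc ‖y - ⟪y, e⟫ • e‖ = projDist y e * ‖y‖ := by
        rw [projDist_eq_norm_sub_inner_smul_div he,
          div_mul_cancel_of_imp fun hy => by simp [norm_eq_zero.mp hy]]
    _ ≤ δ * ‖y‖ := mul_le_mul_of_nonneg_right h (norm_nonneg _)

theorem abs_inner_le_distToSub_mul {n : ℕ} {x z : EuclideanSpace ℝ (Fin n)}
    {V : Submodule ℝ (EuclideanSpace ℝ (Fin n))} (hz : z ∈ Vᗮ) :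
    |⟪x, z⟫| ≤ distToSub x V * ‖x‖ * ‖z‖ := by
  rw [distToSub, div_mul_cancel_of_imp fun hx => by simp [norm_eq_zero.mp hx],
    ← Vᗮ.inner_orthogonalProjectionOnto_eq_of_mem_right ⟨z, hz⟩ x]
  exact abs_real_inner_le_norm _ _

theorem abs_inner_sub_inner_le_of_distToSub_le {n : ℕ} {x v w : EuclideanSpace ℝ (Fin n)}
    {V : Submodule ℝ (EuclideanSpace ℝ (Fin n))} {δ : ℝ} (hv : ‖v‖ = 1) (hw : ‖w‖ = 1)
    (hvw : v - w ∈ Vᗮ) (h : distToSub x V ≤ δ) : |⟪x, v⟫ - ⟪x, w⟫| ≤ 2 * δ * ‖x‖ := by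
  have hvw2 : ‖v - w‖ ≤ 2 := (norm_sub_le _ _).trans (by rw [hv, hw]; norm_num)
  have hδ0 : 0 ≤ δ := le_trans (by unfold distToSub; positivity) h
  rw [← inner_sub_right]
  calc _ ≤ distToSub x V * ‖x‖ * ‖v - w‖ := abs_inner_le_distToSub_mul hvw
    _ ≤ δ * ‖x‖ * 2 := by gcongr
    _ = 2 * δ * ‖x‖ := by ring

theorem stmt8_general {n r : ℕ} (hrn : r ≤ n)
    (b : OrthonormalBasis (Fin n) ℝ (EuclideanSpace ℝ (Fin n)))
    (V : Submodule ℝ (EuclideanSpace ℝ (Fin n)))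
    (hV : V = Submodule.span ℝ
      (insert (∑ i ∈ Finset.univ.filter (fun i : Fin n => (i : ℕ) < r), b i)
        (b '' {i : Fin n | r ≤ (i : ℕ)})))
    (δ : ℝ) (hδ0 : 0 ≤ δ) (hδ : δ ≤ 1 / (24 * r))
    (x : EuclideanSpace ℝ (Fin n))
    (xs : Fin r → EuclideanSpace ℝ (Fin n))
    (hdV : distToSub x V ≤ δ)
    (hd : ∀ j : Fin r, projDist (xs j) (b (Fin.castLE hrn j)) ≤ δ)
    (a : Fin r → ℝ) (hsum : x = ∑ j, a j • xs j) :
    ∀ j : Fin r, ‖x‖ / (2 * Real.sqrt r) ≤ ‖a j • xs j‖ ∧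
      ‖a j • xs j‖ ≤ 2 * ‖x‖ / Real.sqrt r := by
  intro j
  set e : Fin r → EuclideanSpace ℝ (Fin n) := fun k => b (Fin.castLE hrn k)
  have he : Orthonormal ℝ e := b.orthonormal.comp _ (Fin.castLE_injective hrn)
  have hperp : ∀ k l, e k - e l ∈ Vᗮ := by
    have hcompl : {i : Fin n | r ≤ (i : ℕ)} =
        (↑(Finset.univ.filter fun i : Fin n => (i : ℕ) < r) : Set (Fin n))ᶜ := by
      ext; simp
    have hmem : ∀ k : Fin r, Fin.castLE hrn k ∈ Finset.univ.filter fun i : Fin n => (i : ℕ) < r :=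
      fun k => by simp
    intro k l
    rw [hV, hcompl]
    exact b.orthonormal.sub_mem_orthogonal_span_insert_sum (hmem k) (hmem l)
  have hcoord : ∀ k l, |⟪x, e k⟫ - ⟪x, e l⟫| ≤ 2 * δ * ‖x‖ := fun k l =>
    abs_inner_sub_inner_le_of_distToSub_le (he.1 k) (he.1 l) (hperp k l) hdV
  have hy : ∀ k, ‖a k • xs k - ⟪a k • xs k, e k⟫ • e k‖ ≤ δ * ‖a k • xs k‖ := by
    intro k
    rw [real_inner_smul_left, mul_smul, ← smul_sub, norm_smul, norm_smul, mul_left_comm]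
    exact mul_le_mul_of_nonneg_left (norm_sub_inner_smul_le_of_projDist_le (he.1 k) (hd k))
      (norm_nonneg _)
  have hδr : δ * Fintype.card (Fin r) ≤ 1 / 24 := by
    have : (r : ℝ) ≠ 0 := by exact_mod_cast j.pos.ne'
    calc δ * Fintype.card (Fin r) ≤ 1 / (24 * r) * r := by simp only [Fintype.card_fin]; gcongr
      _ = 1 / 24 := by field_simp
  subst hsum
  simpa using norm_summand_comparable_of_almost_aligned he hδ0 hδr hy hcoord j

theorem stmt8 {n r : ℕ} (hr : 1 ≤ r) (hrn : r ≤ n)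
    (b : OrthonormalBasis (Fin n) ℝ (EuclideanSpace ℝ (Fin n)))
    (V : Submodule ℝ (EuclideanSpace ℝ (Fin n)))
    (hV : V = Submodule.span ℝ
      (insert (∑ i ∈ Finset.univ.filter (fun i : Fin n => (i : ℕ) < r), b i)
        (b '' {i : Fin n | r ≤ (i : ℕ)})))
    (δ : ℝ) (hδ0 : 0 ≤ δ) (hδ : δ ≤ 1 / (24 * r))
    (x : EuclideanSpace ℝ (Fin n)) (hx : x ≠ 0)
    (xs : Fin r → EuclideanSpace ℝ (Fin n)) (hxs : ∀ j, xs j ≠ 0)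
    (hdV : distToSub x V ≤ δ)
    (hd : ∀ j : Fin r, projDist (xs j) (b (Fin.castLE hrn j)) ≤ δ)
    (a : Fin r → ℝ) (hsum : x = ∑ j, a j • xs j) :
    ∀ j : Fin r, ‖x‖ / (2 * Real.sqrt r) ≤ ‖a j • xs j‖ ∧
      ‖a j • xs j‖ ≤ 2 * ‖x‖ / Real.sqrt r :=
  stmt8_general hrn b V hV δ hδ0 hδ x xs hdV hd a hsum
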